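/- Let $\mathcal{F}, \mathcal{G} \subseteq 2^{[n]}$ be cross-Sperner families. Then $|\mathcal{F}|^{1/2} + |\mathcal{G}|^{1/2} \leq 2^{n/2}$. -/

import Mathlib

/-!
Let `U` and `D` be the families of sets lying above, resp. below, some member of `F`. Then `U` is
an up-set and `D` a down-set with `F ⊆ U ∩ D`, while cross-Sperner-ness puts `G` inside
`Uᶜ ∩ Dᶜ`, the intersection of a down-set and an up-set. With `N = 2 ^ n`, the
Harris–Kleitman inequality gives `N |F| ≤ |U| |D|` and `N |G| ≤ (N - |U|) (N - |D|)`, and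
AM–GM on each product yields
`√(N |F|) + √(N |G|) ≤ (|U| + |D|) / 2 + (2N - |U| - |D|) / 2 = N`.
-/

open Finset

namespace Real

lemma sqrt_mul_le_add_div_two {a b : ℝ} (ha : 0 ≤ a) (hb : 0 ≤ b) :
    √(a * b) ≤ (a + b) / 2 :=
  (sqrt_le_left (by positivity)).2 (by nlinarith [four_mul_le_sq_add a b])

lemma sqrt_add_sqrt_le_sqrt_of_mul_le {N u d f g : ℝ} (hN : 0 < N) (hu : 0 ≤ u) (hd : 0 ≤ d)
    (huN : u ≤ N) (hdN : d ≤ N) (hf : N * f ≤ u * d) (hg : N * g ≤ (N - u) * (N - d)) :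
    √f + √g ≤ √N := by
  have hNpos : 0 < √N := sqrt_pos.2 hN
  refine le_of_mul_le_mul_left ?_ hNpos
  calc √N * (√f + √g) = √(N * f) + √(N * g) := by
        rw [mul_add, sqrt_mul hN.le, sqrt_mul hN.le]
    _ ≤ √(u * d) + √((N - u) * (N - d)) := add_le_add (sqrt_le_sqrt hf) (sqrt_le_sqrt hg)
    _ ≤ (u + d) / 2 + ((N - u) + (N - d)) / 2 :=
        add_le_add (sqrt_mul_le_add_div_two hu hd)
          (sqrt_mul_le_add_div_two (sub_nonneg.2 huN) (sub_nonneg.2 hdN))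
    _ = √N * √N := by rw [mul_self_sqrt hN.le]; ring

end Real

namespace Finset

variable {α : Type*} [Fintype α] [DecidableEq α]

def upClosure (𝒜 : Finset (Finset α)) : Finset (Finset α) := {s | ∃ a ∈ 𝒜, a ⊆ s}

def downClosure (𝒜 : Finset (Finset α)) : Finset (Finset α) := {s | ∃ a ∈ 𝒜, s ⊆ a}

@[simp] lemma mem_upClosure {𝒜 : Finset (Finset α)} {s : Finset α} :
    s ∈ upClosure 𝒜 ↔ ∃ a ∈ 𝒜, a ⊆ s := by
  simp [upClosure]

@[simp] lemma mem_downClosure {𝒜 : Finset (Finset α)} {s : Finset α} :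
    s ∈ downClosure 𝒜 ↔ ∃ a ∈ 𝒜, s ⊆ a := by
  simp [downClosure]

lemma isUpperSet_upClosure (𝒜 : Finset (Finset α)) :
    IsUpperSet (upClosure 𝒜 : Set (Finset α)) :=
  fun _ _ hst hs ↦
    let ⟨a, ha, has⟩ := mem_upClosure.1 hs
    mem_upClosure.2 ⟨a, ha, has.trans hst⟩

lemma isLowerSet_downClosure (𝒜 : Finset (Finset α)) :
    IsLowerSet (downClosure 𝒜 : Set (Finset α)) :=
  fun _ _ hts hs ↦
    let ⟨a, ha, hsa⟩ := mem_downClosure.1 hs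
    mem_downClosure.2 ⟨a, ha, hts.trans hsa⟩

lemma subset_upClosure_inter_downClosure (𝒜 : Finset (Finset α)) :
    𝒜 ⊆ upClosure 𝒜 ∩ downClosure 𝒜 :=
  fun a ha ↦ mem_inter.2
    ⟨mem_upClosure.2 ⟨a, ha, subset_rfl⟩, mem_downClosure.2 ⟨a, ha, subset_rfl⟩⟩

lemma subset_compl_upClosure_inter_compl_downClosure {𝒜 ℬ : Finset (Finset α)}
    (h : ∀ A ∈ 𝒜, ∀ B ∈ ℬ, ¬ A ⊆ B ∧ ¬ B ⊆ A) :
    ℬ ⊆ (upClosure 𝒜)ᶜ ∩ (downClosure 𝒜)ᶜ := by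
  intro B hB
  simp only [mem_inter, mem_compl, mem_upClosure, mem_downClosure, not_exists, not_and]
  exact ⟨fun A hA ↦ (h A hA B hB).1, fun A hA ↦ (h A hA B hB).2⟩

lemma two_pow_mul_card_le_card_upClosure_mul_card_downClosure (𝒜 : Finset (Finset α)) :
    2 ^ Fintype.card α * #𝒜 ≤ #(upClosure 𝒜) * #(downClosure 𝒜) :=
  (Nat.mul_le_mul_left _ (card_le_card (subset_upClosure_inter_downClosure 𝒜))).trans
    ((isUpperSet_upClosure 𝒜).card_inter_le_finset (isLowerSet_downClosure 𝒜))

lemma two_pow_mul_card_le_card_compl_upClosure_mul_card_compl_downClosure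
    {𝒜 ℬ : Finset (Finset α)} (h : ∀ A ∈ 𝒜, ∀ B ∈ ℬ, ¬ A ⊆ B ∧ ¬ B ⊆ A) :
    2 ^ Fintype.card α * #ℬ ≤ #(upClosure 𝒜)ᶜ * #(downClosure 𝒜)ᶜ := by
  have hU : IsLowerSet (↑(upClosure 𝒜)ᶜ : Set (Finset α)) := by
    rw [coe_compl, isLowerSet_compl]; exact isUpperSet_upClosure 𝒜
  have hD : IsUpperSet (↑(downClosure 𝒜)ᶜ : Set (Finset α)) := by
    rw [coe_compl, isUpperSet_compl]; exact isLowerSet_downClosure 𝒜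
  have hsub := subset_compl_upClosure_inter_compl_downClosure h
  exact (Nat.mul_le_mul_left _ (card_le_card hsub)).trans (hU.card_inter_le_finset hD)

theorem sqrt_card_add_sqrt_card_le {𝒜 ℬ : Finset (Finset α)}
    (h : ∀ A ∈ 𝒜, ∀ B ∈ ℬ, ¬ A ⊆ B ∧ ¬ B ⊆ A) :
    √(#𝒜 : ℝ) + √(#ℬ : ℝ) ≤ √(2 ^ Fintype.card α) := by
  have hF := two_pow_mul_card_le_card_upClosure_mul_card_downClosure 𝒜
  have hG := two_pow_mul_card_le_card_compl_upClosure_mul_card_compl_downClosure h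
  have hU := card_le_univ (upClosure 𝒜)
  have hD := card_le_univ (downClosure 𝒜)
  rw [card_compl, card_compl] at hG
  rw [← Fintype.card_finset] at hF hG
  rw [show (2 : ℝ) ^ Fintype.card α = Fintype.card (Finset α) by simp]
  refine mod_cast Real.sqrt_add_sqrt_le_sqrt_of_mul_le (by positivity) (Nat.cast_nonneg _)
    (Nat.cast_nonneg _) (Nat.cast_le.2 hU) (Nat.cast_le.2 hD) (mod_cast hF) ?_
  rw [← Nat.cast_sub hU, ← Nat.cast_sub hD]
  exact mod_cast hG

end Finset

theorem cross_sperner_counting (n : ℕ) (F G : Finset (Finset (Fin n)))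
    (hCS : ∀ A ∈ F, ∀ B ∈ G, ¬ A ⊆ B ∧ ¬ B ⊆ A) :
    Real.sqrt F.card + Real.sqrt G.card ≤ Real.sqrt (2 ^ n) := by
  simpa using sqrt_card_add_sqrt_card_le hCS
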